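/- arXiv:2402.16771 — 4 statements merged into one kernel-verified Lean document; each statement's English description precedes it below -/
import Mathlib

section
/- If a real-valued random variable X has variance of the maximum of n i.i.d. copies tending to 0 as n → ∞ (i.e., Var[X^{(n)}] → 0), then the expectation of the maximum satisfies E[X^{(2n)}] ≤ E[X^{(n)}] + 2·sqrt(Var[X^{(n)}]) for all n. -/
open MeasureTheory ProbabilityTheory Filter Finset

/-- Running maximum of `X a, X (a+1), ..., X (a+k)`. -/
noncomputable def runMax {Ω : Type*} (X : ℕ → Ω → ℝ) (a : ℕ) : ℕ → Ω → ℝ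
  | 0 => X a
  | k + 1 => fun ω => runMax X a k ω ⊔ X (a + (k + 1)) ω

lemma runMax_eq_sup' {Ω : Type*} (X : ℕ → Ω → ℝ) (a k : ℕ) (ω : Ω) :
    runMax X a k ω = (Iio (k + 1)).sup' ⟨0, by simp⟩ (fun j => X (a + j) ω) := by
  induction k with
  | zero => simp [runMax, show Iio 1 = {0} from rfl]
  | succ k ih =>
      have h : Iio (k + 2) = insert (k + 1) (Iio (k + 1)) := by
        ext x; simp [Finset.mem_insert]; omega
      rw [show runMax X a (k+1) ω = runMax X a k ω ⊔ X (a + (k+1)) ω from rfl, ih,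
        Finset.sup'_congr (Finset.nonempty_Iio.2 (by simp)) h (fun _ _ => rfl), Finset.sup'_insert]
      exact sup_comm _ _

lemma runMax_measurable {Ω : Type*} [MeasurableSpace Ω] {X : ℕ → Ω → ℝ}
    (hmeas : ∀ i, Measurable (X i)) (a k : ℕ) : Measurable (runMax X a k) := by
  induction k with
  | zero => exact hmeas a
  | succ k ih => exact ih.sup (hmeas _)

lemma runMax_indep {Ω : Type*} [MeasureSpace Ω] [IsProbabilityMeasure (ℙ : Measure Ω)]
    {X : ℕ → Ω → ℝ} (hmeas : ∀ i, Measurable (X i))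
    (hindep : iIndepFun X ℙ) (a k : ℕ) :
    IndepFun (runMax X a k) (X (a + (k + 1))) ℙ := by
  classical
  set e : ℕ ↪ ℕ := ⟨fun j => a + j, add_right_injective a⟩ with he
  set S : Finset ℕ := (Iio (k + 1)).map e with hS
  set T : Finset ℕ := {a + (k + 1)} with hT
  have hST : Disjoint S T := by
    simp only [hS, hT, Finset.disjoint_left, Finset.mem_map, Finset.mem_Iio,
      Finset.mem_singleton, he, Function.Embedding.coeFn_mk]
    rintro x ⟨j, hj, rfl⟩ hx
    omega
  have base := hindep.indepFun_finset S T hST hmeas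
  have hSa : (a : ℕ) ∈ S := by
    simp only [hS, Finset.mem_map, Finset.mem_Iio, he, Function.Embedding.coeFn_mk]
    exact ⟨0, by omega, by omega⟩
  haveI : Nonempty {x // x ∈ S} := ⟨⟨a, hSa⟩⟩
  set φ : ({x // x ∈ S} → ℝ) → ℝ :=
    fun v => (Finset.univ).sup' Finset.univ_nonempty (fun i => v i) with hφ
  set ψ : ({x // x ∈ T} → ℝ) → ℝ :=
    fun v => v ⟨a + (k + 1), Finset.mem_singleton_self _⟩ with hψ
  have hφm : Measurable φ := by
    have h := Finset.measurable_sup' (Finset.univ_nonempty (α := {x // x ∈ S}))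
      (f := fun (i : {x // x ∈ S}) (v : {x // x ∈ S} → ℝ) => v i)
      (fun i _ => measurable_pi_apply i)
    have : φ = Finset.univ.sup' Finset.univ_nonempty
        (fun (i : {x // x ∈ S}) (v : {x // x ∈ S} → ℝ) => v i) := by
      funext v; rw [Finset.sup'_apply]
    rwa [this]
  have hψm : Measurable ψ := measurable_pi_apply _
  have key := base.comp hφm hψm
  have h1 : (φ ∘ fun ω (i : {x // x ∈ S}) => X i ω) = runMax X a k := by
    funext ω
    rw [runMax_eq_sup' X a k ω]
    show (Finset.univ.sup' Finset.univ_nonempty fun i : {x // x ∈ S} => X i ω) = _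
    have hmap : (Finset.univ : Finset {x // x ∈ S}).map (Function.Embedding.subtype _) = S := by
      rw [Finset.univ_eq_attach, Finset.attach_map_val]
    calc (Finset.univ.sup' Finset.univ_nonempty fun i : {x // x ∈ S} => X i ω)
        = ((Finset.univ : Finset {x // x ∈ S}).map (Function.Embedding.subtype _)).sup'
            (Finset.map_nonempty.2 Finset.univ_nonempty) (fun i => X i ω) :=
          by
            exact Finset.sup'_comp_eq_map
              (f := (Function.Embedding.subtype (fun x => x ∈ S)))
              (fun i => X i ω) Finset.univ_nonempty
      _ = S.sup' ⟨a, hSa⟩ (fun i => X i ω) := Finset.sup'_congr _ hmap (fun _ _ => rfl)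
      _ = (Iio (k + 1)).sup' ⟨0, by simp⟩ (fun j => X (a + j) ω) := Finset.sup'_map _ _
  rw [h1] at key
  exact key

lemma runMax_ident {Ω : Type*} [MeasureSpace Ω] [IsProbabilityMeasure (ℙ : Measure Ω)]
    {X : ℕ → Ω → ℝ} (hmeas : ∀ i, Measurable (X i))
    (hindep : iIndepFun X ℙ)
    (hident : ∀ i, IdentDistrib (X i) (X 0) ℙ ℙ) (k : ℕ) :
    ∀ a, IdentDistrib (runMax X a k) (runMax X 0 k) ℙ ℙ := by
  induction k with
  | zero => exact fun a => (hident a)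
  | succ k ih =>
      intro a
      have mA : Measurable (runMax X a k) := runMax_measurable hmeas a k
      have mB : Measurable (runMax X 0 k) := runMax_measurable hmeas 0 k
      have iA := runMax_indep hmeas hindep a k
      have iB := runMax_indep hmeas hindep 0 k
      have hXX : IdentDistrib (X (a + (k + 1))) (X (0 + (k + 1))) ℙ ℙ :=
        (hident _).trans (hident _).symm
      have pair : IdentDistrib (fun ω => (runMax X a k ω, X (a + (k + 1)) ω))
          (fun ω => (runMax X 0 k ω, X (0 + (k + 1)) ω)) ℙ ℙ := by
        refine ⟨(mA.prodMk (hmeas _)).aemeasurable, (mB.prodMk (hmeas _)).aemeasurable, ?_⟩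
        rw [(indepFun_iff_map_prod_eq_prod_map_map mA.aemeasurable
            (hmeas _).aemeasurable).1 iA,
          (indepFun_iff_map_prod_eq_prod_map_map mB.aemeasurable
            (hmeas _).aemeasurable).1 iB,
          (ih a).map_eq, hXX.map_eq]
      have := pair.comp (measurable_fst.sup measurable_snd : Measurable
        fun p : ℝ × ℝ => p.1 ⊔ p.2)
      exact this

theorem stmt0 {Ω : Type*} [MeasureSpace Ω] [IsProbabilityMeasure (ℙ : Measure Ω)]
    (X : ℕ → Ω → ℝ)
    (hmeas : ∀ i, Measurable (X i))
    (hindep : iIndepFun X ℙ)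
    (hident : ∀ i, IdentDistrib (X i) (X 0) ℙ ℙ)
    (M : ℕ → Ω → ℝ)
    (hM : ∀ n ω, M n ω = ⨆ i : Fin n, X i ω)
    (hint : ∀ n, Integrable (M n) ℙ)
    (hL2 : ∀ n, MemLp (M n) 2 ℙ)
    (hvar : Tendsto (fun n => variance (M n) ℙ) atTop (nhds 0)) :
    ∀ n, ∫ ω, M (2 * n) ω ∂ℙ ≤ ∫ ω, M n ω ∂ℙ + 2 * Real.sqrt (variance (M n) ℙ) := by
  have hMsup : ∀ n (hn : 0 < n) ω,
      M n ω = (Iio n).sup' ⟨0, Finset.mem_Iio.2 hn⟩ (fun j => X j ω) := by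
    intro n hn ω
    haveI : Nonempty (Fin n) := Fin.pos_iff_nonempty.1 hn
    rw [hM n ω, ← Finset.sup'_univ_eq_ciSup]
    have hmap : (Finset.univ : Finset (Fin n)).map Fin.valEmbedding = Iio n :=
      Fin.map_valEmbedding_univ
    calc (Finset.univ : Finset (Fin n)).sup' Finset.univ_nonempty (fun i => X i ω)
        = ((Finset.univ : Finset (Fin n)).map Fin.valEmbedding).sup'
            (Finset.map_nonempty.2 Finset.univ_nonempty) (fun j => X j ω) := by
          exact Finset.sup'_comp_eq_map (f := Fin.valEmbedding) (fun j => X j ω)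
            Finset.univ_nonempty
      _ = (Iio n).sup' ⟨0, Finset.mem_Iio.2 hn⟩ (fun j => X j ω) :=
          Finset.sup'_congr _ hmap (fun _ _ => rfl)
  rintro (_ | k)
  · have h20 : 2 * 0 = 0 := rfl
    rw [h20]
    have := Real.sqrt_nonneg (variance (M 0) ℙ)
    linarith
  set n := k + 1 with hn
  have hn0 : 0 < n := Nat.succ_pos k
  set m := ∫ ω, M n ω ∂ℙ with hm
  set B := runMax X n k with hB
  -- M n equals runMax X 0 k
  have hMrun : ∀ ω, M n ω = runMax X 0 k ω := by
    intro ω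
    rw [hMsup n hn0 ω, runMax_eq_sup' X 0 k ω]
    exact Finset.sup'_congr _ rfl (fun j _ => by rw [Nat.zero_add])
  have mB : Measurable B := runMax_measurable hmeas n k
  have identB : IdentDistrib B (M n) ℙ ℙ := by
    refine (runMax_ident hmeas hindep hident k n).trans ?_
    exact IdentDistrib.of_ae_eq (runMax_measurable hmeas 0 k).aemeasurable
      (Filter.Eventually.of_forall fun ω => (hMrun ω).symm)
  have intB : Integrable B ℙ := identB.integrable_iff.2 (hint n)
  -- pointwise bound
  have hpt : ∀ ω, M (2 * n) ω ≤ m + (|M n ω - m| + |B ω - m|) := by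
    intro ω
    have h2n : 0 < 2 * n := by omega
    have hsup : M (2 * n) ω ≤ M n ω ⊔ B ω := by
      rw [hMsup (2 * n) h2n ω]
      apply Finset.sup'_le
      intro j hj
      rw [Finset.mem_Iio] at hj
      by_cases hjn : j < n
      · refine le_sup_of_le_left ?_
        rw [hMsup n hn0 ω]
        exact Finset.le_sup' (f := fun j' => X j' ω) (Finset.mem_Iio.2 hjn)
      · refine le_sup_of_le_right ?_
        rw [hB, runMax_eq_sup' X n k ω]
        have hmem : j - n ∈ Iio (k + 1) := Finset.mem_Iio.2 (by omega)
        have : X (n + (j - n)) ω ≤ (Iio (k+1)).sup' ⟨0, by simp⟩ (fun j' => X (n + j') ω) :=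
          Finset.le_sup' (f := fun j' => X (n + j') ω) hmem
        rwa [show n + (j - n) = j by omega] at this
    have h1 : M n ω ≤ m + (|M n ω - m| + |B ω - m|) := by
      have := le_abs_self (M n ω - m)
      have := abs_nonneg (B ω - m)
      linarith
    have h2 : B ω ≤ m + (|M n ω - m| + |B ω - m|) := by
      have := le_abs_self (B ω - m)
      have := abs_nonneg (M n ω - m)
      linarith
    exact hsup.trans (sup_le h1 h2)
  -- integrability of the bound
  have intAbsM : Integrable (fun ω => |M n ω - m|) ℙ :=
    ((hint n).sub (integrable_const m)).abs
  have intAbsB : Integrable (fun ω => |B ω - m|) ℙ :=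
    (intB.sub (integrable_const m)).abs
  have hIneq : ∫ ω, M (2 * n) ω ∂ℙ
      ≤ ∫ ω, (m + (|M n ω - m| + |B ω - m|)) ∂ℙ := by
    refine integral_mono (hint (2 * n)) ?_ hpt
    exact (integrable_const m).add (intAbsM.add intAbsB)
  have hsplit : ∫ ω, (m + (|M n ω - m| + |B ω - m|)) ∂ℙ
      = m + (∫ ω, |M n ω - m| ∂ℙ + ∫ ω, |B ω - m| ∂ℙ) := by
    have e1 : ∫ ω, (m + (|M n ω - m| + |B ω - m|)) ∂ℙ
        = (∫ _ω, m ∂ℙ) + ∫ ω, (|M n ω - m| + |B ω - m|) ∂ℙ :=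
      integral_add (integrable_const m) (intAbsM.add intAbsB)
    have e2 : ∫ ω, (|M n ω - m| + |B ω - m|) ∂ℙ
        = (∫ ω, |M n ω - m| ∂ℙ) + ∫ ω, |B ω - m| ∂ℙ :=
      integral_add intAbsM intAbsB
    rw [e1, e2, integral_const]
    simp
  -- equal distribution of the absolute deviations
  have hEq : ∫ ω, |B ω - m| ∂ℙ = ∫ ω, |M n ω - m| ∂ℙ := by
    have h1 : IdentDistrib (fun ω => |B ω - m|) (fun ω => |M n ω - m|) ℙ ℙ :=
      (identB.sub_const m).comp measurable_abs
    exact h1.integral_eq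
  -- bound E|M n - m| by sqrt of variance
  have hAbsLe : ∫ ω, |M n ω - m| ∂ℙ ≤ Real.sqrt (variance (M n) ℙ) := by
    have hY : MemLp (fun ω => M n ω - m) 2 ℙ := (hL2 n).sub (memLp_const m)
    have hZ : MemLp (fun ω => |M n ω - m|) 2 ℙ := hY.abs
    have hvdef := variance_eq_sub hZ
    have hvnn := variance_nonneg (fun ω => |M n ω - m|) ℙ
    have hsq : ∫ ω, |M n ω - m| ^ 2 ∂ℙ = variance (M n) ℙ := by
      rw [variance_eq_integral (hL2 n).aemeasurable]
      congr 1
      funext ω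
      simp [sq_abs, hm]
    have hsq' : (∫ ω, |M n ω - m| ∂ℙ) ^ 2 ≤ variance (M n) ℙ := by
      have : ((fun ω => |M n ω - m|) ^ 2) = fun ω => |M n ω - m| ^ 2 := rfl
      rw [this] at hvdef
      have hμ : (ℙ : Measure Ω)[fun ω => |M n ω - m| ^ 2] = ∫ ω, |M n ω - m| ^ 2 ∂ℙ := rfl
      nlinarith [hvdef, hvnn, hsq]
    have hnn : 0 ≤ ∫ ω, |M n ω - m| ∂ℙ :=
      integral_nonneg fun ω => abs_nonneg _
    calc ∫ ω, |M n ω - m| ∂ℙ = Real.sqrt ((∫ ω, |M n ω - m| ∂ℙ) ^ 2) :=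
          (Real.sqrt_sq hnn).symm
      _ ≤ Real.sqrt (variance (M n) ℙ) := Real.sqrt_le_sqrt hsq'
  calc ∫ ω, M (2 * n) ω ∂ℙ
      ≤ m + (∫ ω, |M n ω - m| ∂ℙ + ∫ ω, |B ω - m| ∂ℙ) := hIneq.trans (le_of_eq hsplit)
    _ = m + 2 * ∫ ω, |M n ω - m| ∂ℙ := by rw [hEq]; ring
    _ ≤ m + 2 * Real.sqrt (variance (M n) ℙ) := by linarith
end

section
/- If a distribution D is β-max-concentrating for some β > 0 (i.e., Var[X^{(n)}] = O(n^{-β}) where X^{(n)} is the maximum of n i.i.d. samples), then E[X^{(n)}] = o(log n). -/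
open MeasureTheory ProbabilityTheory Filter

-- Lemma A: L1 distance to mean bounded by sqrt of variance
lemma abs_dev_int_le {Ω : Type*} [MeasureSpace Ω] [IsProbabilityMeasure (ℙ : Measure Ω)]
    {X : Ω → ℝ} (hX : MemLp X 2 ℙ) :
    ∫ ω, |X ω - ∫ ω', X ω' ∂ℙ| ∂ℙ ≤ Real.sqrt (variance X ℙ) := by
  set m := ∫ ω', X ω' ∂ℙ
  have h2 : MemLp (fun ω => |X ω - m|) 2 ℙ := (hX.sub (memLp_const m)).abs
  have hvd := variance_nonneg (fun ω => |X ω - m|) ℙ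
  rw [variance_eq_sub h2] at hvd
  have hsq : (∫ ω, |X ω - m| ∂ℙ) ^ 2 ≤ ∫ ω, |X ω - m| ^ 2 ∂ℙ := by
    simp only [Pi.pow_apply] at hvd
    linarith
  have hvar : variance X ℙ = ∫ ω, (X ω - m) ^ 2 ∂ℙ := by
    rw [variance_eq_integral hX.aemeasurable]
  have habs : ∫ ω, |X ω - m| ^ 2 ∂ℙ = ∫ ω, (X ω - m) ^ 2 ∂ℙ := by
    congr 1; ext ω; rw [sq_abs]
  rw [hvar, ← habs]
  have h0 : 0 ≤ ∫ ω, |X ω - m| ∂ℙ := integral_nonneg fun ω => abs_nonneg _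
  calc ∫ ω, |X ω - m| ∂ℙ = Real.sqrt ((∫ ω, |X ω - m| ∂ℙ) ^ 2) := (Real.sqrt_sq h0).symm
    _ ≤ Real.sqrt (∫ ω, |X ω - m| ^ 2 ∂ℙ) := Real.sqrt_le_sqrt hsq

-- CDF of max of n iid along an injection
lemma measure_iSup_le_eq {Ω : Type*} [MeasureSpace Ω] [IsProbabilityMeasure (ℙ : Measure Ω)]
    (X : ℕ → Ω → ℝ) (hmeas : ∀ i, Measurable (X i))
    (hindep : iIndepFun X ℙ)
    (hident : ∀ i, IdentDistrib (X i) (X 0) ℙ ℙ)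
    (n : ℕ) (hn : 1 ≤ n) (g : ℕ → ℕ) (hg : Function.Injective g) (t : ℝ) :
    ℙ {ω | (⨆ i : Fin n, X (g i) ω) ≤ t} = ℙ (X 0 ⁻¹' Set.Iic t) ^ n := by
  haveI : Nonempty (Fin n) := Fin.pos_iff_nonempty.mp hn
  set S : Finset ℕ := (Finset.range n).map ⟨g, hg⟩ with hS
  have hset : {ω | (⨆ i : Fin n, X (g i) ω) ≤ t} = ⋂ i ∈ S, X i ⁻¹' Set.Iic t := by
    ext ω
    simp only [Set.mem_setOf_eq, Set.mem_iInter, Set.mem_preimage, Set.mem_Iic, hS,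
      Finset.mem_map, Finset.mem_range, Function.Embedding.coeFn_mk]
    rw [ciSup_le_iff (Set.Finite.bddAbove (Set.finite_range _))]
    constructor
    · rintro h i ⟨j, hj, rfl⟩; exact h ⟨j, hj⟩
    · intro h i; exact h (g i) ⟨i, i.2, rfl⟩
  rw [hset, hindep.measure_inter_preimage_eq_mul S (sets := fun _ => Set.Iic t)
    (fun i _ => measurableSet_Iic)]
  rw [hS, Finset.prod_map]
  have heach : ∀ j, ℙ (X j ⁻¹' Set.Iic t) = ℙ (X 0 ⁻¹' Set.Iic t) := by
    intro j
    rw [← Measure.map_apply (hmeas j) measurableSet_Iic,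
      ← Measure.map_apply (hmeas 0) measurableSet_Iic, (hident j).map_eq]
  simp only [Function.Embedding.coeFn_mk]
  rw [Finset.prod_congr rfl (fun j _ => heach (g j)), Finset.prod_const, Finset.card_range]

lemma shifted_max_identDistrib {Ω : Type*} [MeasureSpace Ω] [IsProbabilityMeasure (ℙ : Measure Ω)]
    (X : ℕ → Ω → ℝ) (hmeas : ∀ i, Measurable (X i))
    (hindep : iIndepFun X ℙ)
    (hident : ∀ i, IdentDistrib (X i) (X 0) ℙ ℙ)
    (n : ℕ) (hn : 1 ≤ n) :
    IdentDistrib (fun ω => ⨆ i : Fin n, X (n + ↑i) ω) (fun ω => ⨆ i : Fin n, X (↑i) ω) ℙ ℙ := by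
  have mY : Measurable (fun ω => ⨆ i : Fin n, X (n + ↑i) ω) :=
    Measurable.iSup fun i => hmeas _
  have mM : Measurable (fun ω => ⨆ i : Fin n, X (↑i : ℕ) ω) :=
    Measurable.iSup fun i => hmeas _
  refine ⟨mY.aemeasurable, mM.aemeasurable, ?_⟩
  refine Measure.ext_of_Iic _ _ fun t => ?_
  rw [Measure.map_apply mY measurableSet_Iic, Measure.map_apply mM measurableSet_Iic]
  have h1 := measure_iSup_le_eq X hmeas hindep hident n hn (fun i => n + i)
    (add_right_injective n) t
  have h2 := measure_iSup_le_eq X hmeas hindep hident n hn id Function.injective_id t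
  simp only [id] at h2
  have e1 : (fun ω => ⨆ i : Fin n, X (n + ↑i) ω) ⁻¹' Set.Iic t
      = {ω | (⨆ i : Fin n, X (n + ↑i) ω) ≤ t} := rfl
  have e2 : (fun ω => ⨆ i : Fin n, X (↑i : ℕ) ω) ⁻¹' Set.Iic t
      = {ω | (⨆ i : Fin n, X (↑i : ℕ) ω) ≤ t} := rfl
  rw [e1, e2, h1, h2]

lemma doubling {Ω : Type*} [MeasureSpace Ω] [IsProbabilityMeasure (ℙ : Measure Ω)]
    (X : ℕ → Ω → ℝ) (hmeas : ∀ i, Measurable (X i))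
    (hindep : iIndepFun X ℙ)
    (hident : ∀ i, IdentDistrib (X i) (X 0) ℙ ℙ)
    (M : ℕ → Ω → ℝ) (hM : ∀ n ω, M n ω = ⨆ i : Fin n, X i ω)
    (hint : ∀ n, Integrable (M n) ℙ) (hL2 : ∀ n, MemLp (M n) 2 ℙ)
    (n : ℕ) (hn : 1 ≤ n) :
    ∫ ω, M (2*n) ω ∂ℙ ≤ ∫ ω, M n ω ∂ℙ + 2 * Real.sqrt (variance (M n) ℙ) := by
  haveI : Nonempty (Fin n) := Fin.pos_iff_nonempty.mp hn
  haveI : Nonempty (Fin (2*n)) := Fin.pos_iff_nonempty.mp (by omega)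
  set m := ∫ ω, M n ω ∂ℙ with hm
  set Y : Ω → ℝ := fun ω => ⨆ i : Fin n, X (n + ↑i) ω with hY
  have hMn : M n = fun ω => ⨆ i : Fin n, X (↑i : ℕ) ω := funext (hM n)
  have hYM : IdentDistrib Y (M n) ℙ ℙ := by
    rw [hMn]; exact shifted_max_identDistrib X hmeas hindep hident n hn
  have hYint : Integrable Y ℙ := hYM.integrable_iff.mpr (hint n)
  set g1 : Ω → ℝ := fun ω => max (Y ω - m) 0 with hg1
  set g2 : Ω → ℝ := fun ω => max (m - M n ω) 0 with hg2
  have hg1int : Integrable g1 ℙ := (hYint.sub (integrable_const m)).pos_part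
  have hg2int : Integrable g2 ℙ := ((integrable_const m).sub (hint n)).pos_part
  have hpt : ∀ ω, M (2*n) ω ≤ M n ω + g1 ω + g2 ω := by
    intro ω
    rw [hM (2*n)]
    have h1 : 0 ≤ g1 ω := le_max_right _ _
    have h2 : 0 ≤ g2 ω := le_max_right _ _
    apply ciSup_le
    intro i
    by_cases h : (i : ℕ) < n
    · have : X (↑i) ω ≤ M n ω := by
        rw [hM n]
        exact le_ciSup (f := fun j : Fin n => X (↑j) ω) (Set.Finite.bddAbove (Set.finite_range _)) (⟨(i : ℕ), h⟩ : Fin n)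
      linarith
    · have hYle : X (↑i) ω ≤ Y ω := by
        have hj : (n + ((i : ℕ) - n) : ℕ) = (i : ℕ) := by omega
        have hjlt : (i : ℕ) - n < n := by have := i.2; omega
        have := le_ciSup (f := fun j : Fin n => X (n + ↑j) ω)
          (Set.Finite.bddAbove (Set.finite_range _)) (⟨(i : ℕ) - n, hjlt⟩ : Fin n)
        simpa [hj] using this
      have hY1 : Y ω ≤ m + g1 ω := by
        rcases le_or_gt (Y ω - m) 0 with h' | h'
        · have : g1 ω = 0 := max_eq_right h'
          linarith
        · have : g1 ω = Y ω - m := max_eq_left h'.le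
          linarith
      have hm2 : m ≤ M n ω + g2 ω := by
        rcases le_or_gt (m - M n ω) 0 with h' | h'
        · have : g2 ω = 0 := max_eq_right h'
          linarith
        · have : g2 ω = m - M n ω := max_eq_left h'.le
          linarith
      linarith
  have hsum : ∫ ω, M (2*n) ω ∂ℙ ≤ ∫ ω, (M n ω + g1 ω + g2 ω) ∂ℙ :=
    integral_mono (hint (2*n)) (((hint n).add hg1int).add hg2int) hpt
  have hadd1 : Integrable (fun ω => M n ω + g1 ω) ℙ := (hint n).add hg1int
  rw [integral_add hadd1 hg2int, integral_add (hint n) hg1int] at hsum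
  have habs : ∫ ω, |M n ω - m| ∂ℙ ≤ Real.sqrt (variance (M n) ℙ) := abs_dev_int_le (hL2 n)
  have hig1 : ∫ ω, g1 ω ∂ℙ ≤ Real.sqrt (variance (M n) ℙ) := by
    have hcomp : IdentDistrib (fun ω => max (Y ω - m) 0) (fun ω => max (M n ω - m) 0) ℙ ℙ :=
      hYM.comp ((measurable_id.sub_const m).max measurable_const)
    rw [hg1, hcomp.integral_eq]
    refine le_trans (integral_mono ?_ ((hint n).sub (integrable_const m)).abs
      (fun ω => by simp [abs_nonneg, le_abs_self, le_max_iff, abs_sub_comm])) habs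
    exact ((hint n).sub (integrable_const m)).pos_part
  have hig2 : ∫ ω, g2 ω ∂ℙ ≤ Real.sqrt (variance (M n) ℙ) := by
    refine le_trans (integral_mono hg2int ((hint n).sub (integrable_const m)).abs
      (fun ω => ?_)) habs
    simp only [Pi.sub_apply]
    rw [abs_sub_comm]
    exact max_le (le_abs_self _) (abs_nonneg _)
  linarith

theorem stmt2 {Ω : Type*} [MeasureSpace Ω] [IsProbabilityMeasure (ℙ : Measure Ω)]
    (X : ℕ → Ω → ℝ)
    (hmeas : ∀ i, Measurable (X i))
    (hindep : iIndepFun X ℙ)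
    (hident : ∀ i, IdentDistrib (X i) (X 0) ℙ ℙ)
    (M : ℕ → Ω → ℝ)
    (hM : ∀ n ω, M n ω = ⨆ i : Fin n, X i ω)
    (hint : ∀ n, Integrable (M n) ℙ)
    (hL2 : ∀ n, MemLp (M n) 2 ℙ)
    (c β : ℝ) (hc : 0 < c) (hβ : 0 < β)
    (hvar : ∀ n : ℕ, 1 ≤ n → variance (M n) ℙ ≤ c * (n : ℝ) ^ (-β)) :
    Tendsto (fun n : ℕ => (∫ ω, M n ω ∂ℙ) / Real.log n) atTop (nhds 0) := by
  set a : ℕ → ℝ := fun n => ∫ ω, M n ω ∂ℙ with ha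
  -- monotonicity of means
  have hmono : ∀ n k : ℕ, 1 ≤ n → n ≤ k → a n ≤ a k := by
    intro n k hn hnk
    haveI : Nonempty (Fin n) := Fin.pos_iff_nonempty.mp hn
    refine integral_mono (hint n) (hint k) (fun ω => ?_)
    rw [hM n, hM k]
    refine ciSup_le (fun i => ?_)
    exact le_ciSup (f := fun j : Fin k => X (↑j) ω)
      (Set.Finite.bddAbove (Set.finite_range _)) (⟨(i : ℕ), lt_of_lt_of_le i.2 hnk⟩ : Fin k)
  set r : ℝ := (2 : ℝ) ^ (-β / 2) with hr
  have hr0 : 0 < r := Real.rpow_pos_of_pos (by norm_num) _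
  have hr1 : r < 1 := Real.rpow_lt_one_of_one_lt_of_neg (by norm_num) (by linarith)
  -- variance bound in sqrt form at powers of two
  have hsq : ∀ k : ℕ, Real.sqrt (variance (M (2 ^ k)) ℙ) ≤ Real.sqrt c * r ^ k := by
    intro k
    have h1 : variance (M (2 ^ k)) ℙ ≤ c * ((2 ^ k : ℕ) : ℝ) ^ (-β) :=
      hvar (2 ^ k) Nat.one_le_two_pow
    have h2 : Real.sqrt (c * ((2 ^ k : ℕ) : ℝ) ^ (-β)) = Real.sqrt c * r ^ k := by
      rw [Real.sqrt_mul hc.le]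
      congr 1
      have hcast : ((2 ^ k : ℕ) : ℝ) = (2 : ℝ) ^ (k : ℕ) := by push_cast; ring
      rw [hcast, Real.sqrt_eq_rpow, ← Real.rpow_natCast (2 : ℝ) k,
        ← Real.rpow_mul (by norm_num), ← Real.rpow_mul (by norm_num), hr,
        ← Real.rpow_natCast ((2 : ℝ) ^ (-β / 2)) k, ← Real.rpow_mul (by norm_num)]
      ring_nf
    rw [← h2]
    exact Real.sqrt_le_sqrt h1
  -- bound at powers of two by induction
  have hpow : ∀ k : ℕ, a (2 ^ k) ≤ a 1 + 2 * Real.sqrt c * ∑ j ∈ Finset.range k, r ^ j := by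
    intro k
    induction k with
    | zero => simp
    | succ k ih =>
      have h2k : (2 : ℕ) ^ (k + 1) = 2 * 2 ^ k := by ring
      have hd := doubling X hmeas hindep hident M hM hint hL2 (2 ^ k) Nat.one_le_two_pow
      rw [← h2k] at hd
      have : a (2 ^ (k + 1)) ≤ a (2 ^ k) + 2 * (Real.sqrt c * r ^ k) := by
        refine hd.trans ?_
        have := hsq k
        have hs := Real.sqrt_nonneg (variance (M (2 ^ k)) ℙ)
        simp only [ha]
        linarith
      rw [Finset.sum_range_succ]
      linarith
  -- geometric sum bound
  have hgeom : ∀ k : ℕ, ∑ j ∈ Finset.range k, r ^ j ≤ (1 - r)⁻¹ := by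
    intro k
    rw [geom_sum_eq hr1.ne]
    have hpos : 0 < 1 - r := by linarith
    have heq : (r ^ k - 1) / (r - 1) = (1 - r ^ k) / (1 - r) := by
      rw [← neg_div_neg_eq]; ring_nf
    rw [heq, ← one_div]
    have hk : 0 ≤ r ^ k := pow_nonneg hr0.le k
    exact (div_le_div_iff_of_pos_right hpos).mpr (by linarith)
  set B : ℝ := a 1 + 2 * Real.sqrt c * (1 - r)⁻¹ with hB
  have hBk : ∀ k, a (2 ^ k) ≤ B := by
    intro k
    refine (hpow k).trans ?_
    have h1 := hgeom k
    have h2 : (0:ℝ) ≤ 2 * Real.sqrt c := by positivity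
    have := mul_le_mul_of_nonneg_left h1 h2
    simp only [hB]
    linarith
  have hub : ∀ n, 1 ≤ n → a n ≤ B := by
    intro n hn
    have h2n : n ≤ 2 ^ n := Nat.le_of_lt (Nat.lt_two_pow_self (n := n))
    exact (hmono n (2 ^ n) hn h2n).trans (hBk n)
  have hlb : ∀ n, 1 ≤ n → a 1 ≤ a n := fun n hn => hmono 1 n le_rfl hn
  set K : ℝ := |a 1| + |B| with hK
  have hKn : ∀ n, 1 ≤ n → |a n| ≤ K := by
    intro n hn
    rw [abs_le]
    have h1 := hlb n hn
    have h2 := hub n hn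
    have h3 := neg_abs_le (a 1)
    have h4 := le_abs_self B
    have h5 := abs_nonneg B
    have h6 := abs_nonneg (a 1)
    constructor <;> simp only [hK] <;> linarith
  have hK0 : (0:ℝ) ≤ K := by positivity
  have hlog : Tendsto (fun n : ℕ => K / Real.log n) atTop (nhds 0) :=
    Tendsto.div_atTop tendsto_const_nhds
      (Real.tendsto_log_atTop.comp tendsto_natCast_atTop_atTop)
  refine squeeze_zero_norm' ?_ hlog
  filter_upwards [eventually_ge_atTop 3] with n hn
  have h3n : (3 : ℝ) ≤ (n : ℝ) := by exact_mod_cast hn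
  have hlogpos : 0 < Real.log n := Real.log_pos (by linarith)
  rw [Real.norm_eq_abs, abs_div, abs_of_pos hlogpos]
  exact (div_le_div_iff_of_pos_right hlogpos).mpr (hKn n (by omega))
end

section
/- Suppose for each c in a finite index set F of size n, reals a_c, b_c ∈ (0,1) satisfy 1 − a_c ≥ (1−ε)(1 − b_c) and 1 − b_c ≤ σ/n, with 0 < ε < 1, σ > 0 and n > 2σ. Then ∏_{c∈F} (b_c / a_c) ≥ exp(−2εσ), and hence ∏_{c∈F} a_c − ∏_{c∈F} b_c ≤ 1 − e^{−2εσ}. -/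
lemma per16 (a b ε σ N : ℝ) (hN : 0 < N) (ha0 : 0 < a) (_ha1 : a < 1)
    (hb0 : 0 < b) (_hb1 : b < 1) (hε : 0 < ε) (hε1 : ε < 1) (hσ : 0 < σ)
    (hnσ : 2 * σ < N) (h1 : 1 - a ≥ (1 - ε) * (1 - b)) (h2 : 1 - b ≤ σ / N) :
    Real.exp (-(2 * ε * σ / N)) ≤ b / a := by
  set x := 2 * ε * σ / N with hx
  have hxpos : 0 < x := by positivity
  have hexp : Real.exp (-x) ≤ 1 / (1 + x) := by
    rw [le_div_iff₀ (by linarith : (0:ℝ) < 1 + x)]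
    have hA := Real.add_one_le_exp x
    have hB : Real.exp (-x) * Real.exp x = 1 := by rw [← Real.exp_add]; simp
    nlinarith [Real.exp_pos (-x)]
  refine hexp.trans ?_
  rw [div_le_div_iff₀ (by linarith) ha0]
  -- need a ≤ b * (1 + x)
  have hσN : σ / N < 1 / 2 := by rw [div_lt_iff₀ hN]; linarith
  have h2' : (1 - b) * N ≤ σ := by
    rw [← le_div_iff₀ hN]; exact h2
  have hxN : x * N = 2 * ε * σ := by rw [hx]; field_simp
  -- a ≤ 1 - (1-ε)(1-b) ≤ b(1+x)
  have key : (1 - (1 - ε) * (1 - b)) * N ≤ b * (1 + x) * N := by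
    have : 2 * ε * σ * (1 - (1 - b)) ≥ ε * ((1 - b) * N) := by
      nlinarith [mul_le_mul_of_nonneg_left h2' hε.le]
    nlinarith [this, hxN]
  have := le_of_mul_le_mul_right (by linarith [key]) hN
  nlinarith [this]

theorem stmt16 {ι : Type*} (F : Finset ι) (n : ℕ) (hn : F.card = n)
    (a b : ι → ℝ) (ε σ : ℝ)
    (hε : 0 < ε) (hε1 : ε < 1) (hσ : 0 < σ) (hnσ : 2 * σ < (n : ℝ))
    (ha : ∀ c ∈ F, a c ∈ Set.Ioo (0 : ℝ) 1)
    (hb : ∀ c ∈ F, b c ∈ Set.Ioo (0 : ℝ) 1)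
    (h1 : ∀ c ∈ F, 1 - a c ≥ (1 - ε) * (1 - b c))
    (h2 : ∀ c ∈ F, 1 - b c ≤ σ / n) :
    Real.exp (-(2 * ε * σ)) ≤ ∏ c ∈ F, (b c / a c) ∧
      (∏ c ∈ F, a c) - (∏ c ∈ F, b c) ≤ 1 - Real.exp (-(2 * ε * σ)) := by
  have hN : (0 : ℝ) < n := by linarith
  have hper : ∀ c ∈ F, Real.exp (-(2 * ε * σ / n)) ≤ b c / a c := fun c hc =>
    per16 (a c) (b c) ε σ n hN (ha c hc).1 (ha c hc).2 (hb c hc).1 (hb c hc).2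
      hε hε1 hσ hnσ (h1 c hc) (h2 c hc)
  have hprod : Real.exp (-(2 * ε * σ)) ≤ ∏ c ∈ F, (b c / a c) := by
    have h := Finset.prod_le_prod (f := fun _ => Real.exp (-(2 * ε * σ / n)))
      (g := fun c => b c / a c) (fun c _ => (Real.exp_pos _).le) hper
    rw [Finset.prod_const, hn, ← Real.exp_nat_mul] at h
    have hcalc : (n : ℝ) * (-(2 * ε * σ / n)) = -(2 * ε * σ) := by
      field_simp
    rwa [hcalc] at h
  refine ⟨hprod, ?_⟩
  have hPa0 : 0 < ∏ c ∈ F, a c := Finset.prod_pos fun c hc => (ha c hc).1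
  have hPa1 : ∏ c ∈ F, a c ≤ 1 :=
    Finset.prod_le_one (fun c hc => (ha c hc).1.le) (fun c hc => (ha c hc).2.le)
  have hdiv : (∏ c ∈ F, (b c / a c)) = (∏ c ∈ F, b c) / (∏ c ∈ F, a c) :=
    Finset.prod_div_distrib _ _
  rw [hdiv] at hprod
  have hb' : Real.exp (-(2 * ε * σ)) * (∏ c ∈ F, a c) ≤ ∏ c ∈ F, b c :=
    (le_div_iff₀ hPa0).mp hprod
  have hexple1 : Real.exp (-(2 * ε * σ)) ≤ 1 := Real.exp_le_one_iff.mpr (by nlinarith)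
  nlinarith [hb', hexple1, hPa0, hPa1, Real.exp_pos (-(2 * ε * σ))]
end

section
/- Let η be a finite measure on ℝ, S > 0, v_S ∈ ℝ with η((v_S, ∞)) = S, and let p : ℝ → [0,1] be a measurable function with ∫_{(v₀, ∞)} p dη ≤ S and p(v) ≥ 1 − r for all v > v₀, where v₀ < v_S and r ∈ [0,1). Then η((v₀, v_S)) ≤ S·r/(1−r). -/
open MeasureTheory

theorem stmt19 (η : Measure ℝ) [IsFiniteMeasure η]
    (S vS v₀ r : ℝ) (p : ℝ → ℝ)
    (hp : Measurable p) (hp01 : ∀ v, p v ∈ Set.Icc (0 : ℝ) 1)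
    (hS : 0 < S) (hvS : (η (Set.Ioi vS)).toReal = S)
    (hint : ∫ v in Set.Ioi v₀, p v ∂η ≤ S)
    (hlow : ∀ v > v₀, 1 - r ≤ p v)
    (hv : v₀ < vS) (hr0 : 0 ≤ r) (hr1 : r < 1) :
    (η (Set.Ioo v₀ vS)).toReal ≤ S * r / (1 - r) := by
  have hpint : IntegrableOn p (Set.Ioi v₀) η := by
    refine (integrable_const (1 : ℝ)).mono' hp.aestronglyMeasurable ?_
    filter_upwards with v
    have := hp01 v
    rw [Real.norm_eq_abs, abs_le]
    constructor <;> linarith [this.1, this.2]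
  have h1 : ∫ _ in Set.Ioi v₀, (1 - r) ∂η ≤ ∫ v in Set.Ioi v₀, p v ∂η := by
    refine setIntegral_mono_on (integrableOn_const (measure_ne_top _ _))
      hpint measurableSet_Ioi ?_
    intro v hv'
    exact hlow v hv'
  rw [setIntegral_const] at h1
  -- measure inequality
  have hsub : Set.Ioo v₀ vS ∪ Set.Ioi vS ⊆ Set.Ioi v₀ := by
    intro x hx
    rcases hx with hx | hx
    · exact hx.1
    · exact lt_trans hv hx
  have hdisj : Disjoint (Set.Ioo v₀ vS) (Set.Ioi vS) := by
    rw [Set.disjoint_left]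
    intro x hx hx'
    exact absurd hx.2 (not_lt.2 hx'.le)
  have hmeas : η (Set.Ioo v₀ vS) + η (Set.Ioi vS) ≤ η (Set.Ioi v₀) := by
    rw [← measure_union hdisj measurableSet_Ioi]
    exact measure_mono hsub
  have hfin : ∀ s : Set ℝ, η s ≠ ⊤ := fun s => measure_ne_top η s
  have hmeasR : (η (Set.Ioo v₀ vS)).toReal + (η (Set.Ioi vS)).toReal ≤ (η (Set.Ioi v₀)).toReal := by
    rw [← ENNReal.toReal_add (hfin _) (hfin _)]
    exact ENNReal.toReal_mono (hfin _) hmeas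
  rw [hvS] at hmeasR
  set M := (η (Set.Ioo v₀ vS)).toReal with hM
  have hMnn : 0 ≤ M := ENNReal.toReal_nonneg
  have key : (M + S) * (1 - r) ≤ S := by
    calc (M + S) * (1 - r) ≤ (η (Set.Ioi v₀)).toReal * (1 - r) := by
          apply mul_le_mul_of_nonneg_right hmeasR (by linarith)
      _ ≤ S := le_trans h1 hint
  rw [le_div_iff₀ (by linarith : (0:ℝ) < 1 - r)]
  nlinarith
end
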